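/- With H_i and p_{i,m} as defined above, p_{1,m}(j) = 1/(2^m+1) for every j ∈ D_{m−1}, and for 2 ≤ i ≤ m−1 and 0 ≤ j ≤ 2^{m−i−1}, p_{i,m}(j) = ∑_{k=0}^{j} p_{i−1,m}(k) p_{i−1,m}(j−k) + 2 ∑_{k=j+1}^{2^{m−i}} p_{i−1,m}(k) p_{i−1,m}(k−j). -/

import Mathlib

open MeasureTheory

/-- `Dm k = {-2^(k-1), …, 2^(k-1)}`, the symmetric set of representatives of
`ℤ/(2^k+1)ℤ` (for `k ≥ 1`). -/
noncomputable def Dm (k : ℕ) : Finset ℤ := Finset.Icc (-(2 ^ (k - 1) : ℤ)) (2 ^ (k - 1))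

lemma Dm_nonempty (k : ℕ) : (Dm k).Nonempty :=
  ⟨0, Finset.mem_Icc.mpr ⟨neg_nonpos.mpr (by positivity), by positivity⟩⟩

/-- Wagner's tree map `H_i` with modulus `M = 2^m+1`; `none` is the failure state `Δ`.
At each level the two halves are combined, surviving only if the sum modulo `M`
has a representative in `D_{m-i}`. -/
noncomputable def wagner (m : ℕ) : (i : ℕ) → (Fin (2 ^ i) → ℤ) → Option ℤ
  | 0, x => some (x 0)
  | (i + 1), x =>
    match wagner m i (fun k => x ⟨k.1,
          lt_of_lt_of_le k.2 (Nat.pow_le_pow_right (by norm_num) (Nat.le_succ i))⟩),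
        wagner m i (fun k => x ⟨2 ^ i + k.1, by
          have hk := k.2; have h2 : (2:ℕ) ^ (i+1) = 2 ^ i + 2 ^ i := by ring
          omega⟩) with
    | some a, some b =>
        if h : ∃ c ∈ Dm (m - (i + 1)), a + b ≡ c [ZMOD ((2 : ℤ) ^ m + 1)] then some h.choose
        else none
    | _, _ => none

/-- the sample space of vectors of length `2^i` with entries in `Dm m`. -/
noncomputable def vecSpace (m i : ℕ) : Finset (Fin (2 ^ i) → ℤ) :=
  Fintype.piFinset fun _ => Dm m

lemma vecSpace_nonempty (m i : ℕ) : (vecSpace m i).Nonempty :=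
  ⟨fun _ => 0, by
    simp only [vecSpace, Fintype.mem_piFinset]
    intro _
    simp only [Dm, Finset.mem_Icc]
    exact ⟨neg_nonpos.mpr (by positivity), by positivity⟩⟩

/-- `p_{i,m}(j) = P(H_i(x) = j)` for `x` with i.i.d. entries uniform on `Dm m`. -/
noncomputable def pim (m i : ℕ) (j : ℤ) : ℝ :=
  ((vecSpace m i).filter (fun x => wagner m i x = some j)).card / (vecSpace m i).card

/-!
The two halves of `x` are independent, so the law of `H_{i+1}` is the image of the product of
two copies of the law of `H_i` under the merge rule, which sends a pair of outputs `(a, b)` to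
the representative of `a + b` modulo `2^m + 1` when it lies in `D_{m-i-1}`. At level one each
`a ∈ D_m` has exactly one partner `b ∈ D_m` with `a + b ≡ j`, so `p_{1,m}(j) = (2^m+1)/(2^m+1)^2`.
For `i ≥ 1` the outputs of `H_i` lie in `D_{m-i}` with `m - i < m`, so `a + b` never wraps around
and the merge is an honest convolution `p_{i+1}(j) = ∑ₐ p_i(a) p_i(j-a)`. Finally
`H_i(-x) = -H_i(x)` makes `p_i` even, and folding the negative half of the convolution onto the
positive one gives the formula.
-/

open Finset

theorem Int.ModEq.eq_of_abs_sub_lt {n a b : ℤ} (h : a ≡ b [ZMOD n]) (hab : |b - a| < n) :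
    a = b :=
  (sub_eq_zero.mp (Int.eq_zero_of_abs_lt_dvd h.dvd hab)).symm

section Representatives

variable {k m : ℕ} {a b c : ℤ}

lemma mem_Dm : a ∈ Dm k ↔ -2 ^ (k - 1) ≤ a ∧ a ≤ 2 ^ (k - 1) := mem_Icc

@[simp] lemma neg_mem_Dm : -a ∈ Dm k ↔ a ∈ Dm k := by
  simp only [mem_Dm]; omega

lemma Dm_mono (h : k ≤ m) : Dm k ⊆ Dm m := by
  have := pow_le_pow_right₀ (one_le_two : (1 : ℤ) ≤ 2) (Nat.sub_le_sub_right h 1)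
  intro a ha
  rw [mem_Dm] at ha ⊢; omega

lemma two_pow_pred_add_two_pow_pred (hk : 1 ≤ k) : (2 : ℤ) ^ (k - 1) + 2 ^ (k - 1) = 2 ^ k := by
  rw [← two_mul, ← pow_succ', Nat.sub_add_cancel hk]

lemma card_Dm (hk : 1 ≤ k) : #(Dm k) = 2 ^ k + 1 := by
  have := two_pow_pred_add_two_pow_pred hk
  have : (0 : ℤ) < 2 ^ (k - 1) := by positivity
  rw [Dm, Int.card_Icc, ← Int.toNat_natCast (2 ^ k + 1)]
  push_cast
  congr 1
  omega

lemma eq_of_mem_Dm_of_modEq (hm : 1 ≤ m) (hk : k ≤ m) (hb : b ∈ Dm k) (hc : c ∈ Dm k)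
    (h : b ≡ c [ZMOD 2 ^ m + 1]) : b = c := by
  have hb' := mem_Dm.mp (Dm_mono hk hb)
  have hc' := mem_Dm.mp (Dm_mono hk hc)
  have := two_pow_pred_add_two_pow_pred hm
  exact h.eq_of_abs_sub_lt (abs_lt.mpr ⟨by omega, by omega⟩)

lemma card_filter_Dm_modEq (hm : 1 ≤ m) (t : ℤ) : #{c ∈ Dm m | c ≡ t [ZMOD 2 ^ m + 1]} = 1 := by
  rw [card_eq_one]
  -- the residue of `t + 2^(m-1)` in `[0, 2^m]`, shifted back into `Dm m`
  set c := (t + 2 ^ (m - 1)) % (2 ^ m + 1) - 2 ^ (m - 1)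
  have hc : c ∈ Dm m := by
    have := Int.emod_nonneg (t + 2 ^ (m - 1)) (by positivity : (2 : ℤ) ^ m + 1 ≠ 0)
    have := Int.emod_lt_of_pos (t + 2 ^ (m - 1)) (by positivity : (0 : ℤ) < 2 ^ m + 1)
    have := two_pow_pred_add_two_pow_pred hm
    rw [mem_Dm]; omega
  have hct : c ≡ t [ZMOD 2 ^ m + 1] := by
    simpa [c] using (Int.mod_modEq (t + 2 ^ (m - 1)) (2 ^ m + 1)).sub_right (2 ^ (m - 1))
  refine ⟨c, eq_singleton_iff_unique_mem.mpr ⟨mem_filter.mpr ⟨hc, hct⟩, fun b hb => ?_⟩⟩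
  rw [mem_filter] at hb
  exact eq_of_mem_Dm_of_modEq hm le_rfl hb.1 hc (hb.2.trans hct.symm)

lemma add_eq_of_mem_Dm_of_modEq (hk : 1 ≤ k) (hkm : k < m) (ha : a ∈ Dm k) (hb : b ∈ Dm k)
    (hc : c ∈ Dm k) (h : a + b ≡ c [ZMOD 2 ^ m + 1]) : a + b = c := by
  have : (2 : ℤ) ^ (k - 1) * 4 ≤ 2 ^ m := by
    rw [show (4 : ℤ) = 2 ^ 2 by norm_num, ← pow_add]
    exact pow_le_pow_right₀ one_le_two (by omega)
  rw [mem_Dm] at ha hb hc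
  exact h.eq_of_abs_sub_lt (abs_lt.mpr ⟨by omega, by omega⟩)

end Representatives

noncomputable def wagnerMerge (m i : ℕ) : Option ℤ → Option ℤ → Option ℤ
  | some a, some b =>
      if h : ∃ c ∈ Dm (m - (i + 1)), a + b ≡ c [ZMOD ((2 : ℤ) ^ m + 1)] then some h.choose
      else none
  | _, _ => none

def finSumFinEquivPowSucc (i : ℕ) : Fin (2 ^ i) ⊕ Fin (2 ^ i) ≃ Fin (2 ^ (i + 1)) :=
  finSumFinEquiv.trans (finCongr (by ring))

def splitHalves {α : Type*} (i : ℕ) :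
    (Fin (2 ^ (i + 1)) → α) ≃ (Fin (2 ^ i) → α) × (Fin (2 ^ i) → α) :=
  ((finSumFinEquivPowSucc i).arrowCongr (Equiv.refl α)).symm.trans
    (Equiv.sumArrowEquivProdArrow _ _ _)

section Wagner

variable {m i : ℕ} {a b j : ℤ}

lemma wagner_succ (x : Fin (2 ^ (i + 1)) → ℤ) :
    wagner m (i + 1) x =
      wagnerMerge m i (wagner m i (splitHalves i x).1) (wagner m i (splitHalves i x).2) := rfl

lemma mem_vecSpace_succ_iff {x : Fin (2 ^ (i + 1)) → ℤ} :
    x ∈ vecSpace m (i + 1) ↔ splitHalves i x ∈ vecSpace m i ×ˢ vecSpace m i := by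
  simp only [vecSpace, mem_product, Fintype.mem_piFinset]
  rw [← (finSumFinEquivPowSucc i).forall_congr_right, Sum.forall]
  rfl

@[simp] lemma wagnerMerge_none_left (o : Option ℤ) : wagnerMerge m i none o = none := by
  cases o <;> rfl

@[simp] lemma wagnerMerge_none_right (o : Option ℤ) : wagnerMerge m i o none = none := by
  cases o <;> rfl

lemma wagnerMerge_eq_some_iff (hm : 1 ≤ m) :
    wagnerMerge m i (some a) (some b) = some j ↔
      j ∈ Dm (m - (i + 1)) ∧ a + b ≡ j [ZMOD 2 ^ m + 1] := by
  simp only [wagnerMerge]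
  split_ifs with h
  · rw [Option.some_inj]
    obtain ⟨hc, hmod⟩ := h.choose_spec
    refine ⟨fun hj => hj ▸ ⟨hc, hmod⟩, fun hj => ?_⟩
    exact eq_of_mem_Dm_of_modEq hm (Nat.sub_le _ _) hc hj.1 (hmod.symm.trans hj.2)
  · exact iff_of_false (by simp) fun hj => h ⟨j, hj⟩

lemma wagner_mem_Dm (hm : 1 ≤ m) {x : Fin (2 ^ i) → ℤ} (hx : x ∈ vecSpace m i)
    (h : wagner m i x = some a) : a ∈ Dm (m - i) := by
  cases i with
  | zero =>
    cases h
    exact Fintype.mem_piFinset.mp hx 0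
  | succ i =>
    rw [wagner_succ] at h
    cases hl : wagner m i (splitHalves i x).1 <;> cases hr : wagner m i (splitHalves i x).2 <;>
      simp only [hl, hr, wagnerMerge_none_left, wagnerMerge_none_right, reduceCtorEq] at h
    exact ((wagnerMerge_eq_some_iff hm).mp h).1

lemma wagnerMerge_map_neg (hm : 1 ≤ m) (o o' : Option ℤ) :
    wagnerMerge m i (o.map Neg.neg) (o'.map Neg.neg) = (wagnerMerge m i o o').map Neg.neg := by
  cases o with
  | none => simp
  | some a =>
    cases o' with
    | none => simp
    | some b =>
      refine Option.ext fun j => ?_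
      have hsum : -a + -b = -(a + b) := by ring
      simp only [Option.map_some, Option.map_eq_some_iff, neg_eq_iff_eq_neg,
        exists_eq_right, wagnerMerge_eq_some_iff hm, hsum, neg_mem_Dm]
      rw [← Int.neg_modEq_neg, neg_neg]

lemma wagner_neg (hm : 1 ≤ m) (x : Fin (2 ^ i) → ℤ) :
    wagner m i (-x) = (wagner m i x).map Neg.neg := by
  induction i with
  | zero => rfl
  | succ i ih =>
    rw [wagner_succ, wagner_succ, ← wagnerMerge_map_neg hm, ← ih, ← ih]
    rfl

end Wagner

theorem Finset.sum_comp_option_eq_sum_card_smul {α β M : Type*} [DecidableEq β]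
    [AddCommMonoid M] {s : Finset α} {t : Finset β} {f : α → Option β}
    (hf : ∀ x ∈ s, ∀ b, f x = some b → b ∈ t) {g : Option β → M} (hg : g none = 0) :
    ∑ x ∈ s, g (f x) = ∑ b ∈ t, #{x ∈ s | f x = some b} • g (some b) := by
  have hmaps : ∀ x ∈ s, f x ∈ insertNone t := fun x hx => mem_insertNone.mpr (hf x hx)
  rw [← sum_fiberwise_of_maps_to' hmaps, sum_insertNone]
  simp only [sum_const, hg, smul_zero, zero_add]

noncomputable def wagnerCount (m i : ℕ) (j : ℤ) : ℕ := #{x ∈ vecSpace m i | wagner m i x = some j}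

section Counting

variable {m i : ℕ} {j : ℤ}

lemma card_vecSpace : #(vecSpace m i) = #(Dm m) ^ 2 ^ i := by
  simp [vecSpace]

lemma pim_eq_wagnerCount_div : pim m i j = wagnerCount m i j / #(Dm m) ^ 2 ^ i := by
  rw [pim, card_vecSpace]; push_cast; rfl

lemma wagnerCount_neg (hm : 1 ≤ m) : wagnerCount m i (-j) = wagnerCount m i j := by
  refine card_equiv (Equiv.neg _) fun x => ?_
  simp only [mem_filter, vecSpace, Fintype.mem_piFinset, Equiv.neg_apply, Pi.neg_apply,
    neg_mem_Dm, wagner_neg hm, Option.map_eq_some_iff, neg_eq_iff_eq_neg, exists_eq_right]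

lemma wagnerCount_eq_zero (hm : 1 ≤ m) (hj : j ∉ Dm (m - i)) : wagnerCount m i j = 0 := by
  rw [wagnerCount, card_eq_zero, filter_eq_empty_iff]
  exact fun x hx h => hj (wagner_mem_Dm hm hx h)

lemma wagnerCount_zero (hj : j ∈ Dm m) : wagnerCount m 0 j = 1 := by
  rw [wagnerCount, card_eq_one]
  refine ⟨fun _ => j, eq_singleton_iff_unique_mem.mpr ⟨?_, fun x hx => ?_⟩⟩
  · simp only [mem_filter, vecSpace, Fintype.mem_piFinset, hj, implies_true, true_and]
    rfl
  · funext k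
    rw [Fin.fin_one_eq_zero k]
    exact Option.some_inj.mp (mem_filter.mp hx).2

lemma wagnerCount_succ (hm : 1 ≤ m) :
    wagnerCount m (i + 1) j = ∑ a ∈ Dm (m - i), wagnerCount m i a *
      ∑ b ∈ Dm (m - i), wagnerCount m i b *
        if wagnerMerge m i (some a) (some b) = some j then 1 else 0 := by
  have hD : ∀ x ∈ vecSpace m i, ∀ b, wagner m i x = some b → b ∈ Dm (m - i) :=
    fun x hx _ => wagner_mem_Dm hm hx
  calc wagnerCount m (i + 1) j
      = #{p ∈ vecSpace m i ×ˢ vecSpace m i |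
          wagnerMerge m i (wagner m i p.1) (wagner m i p.2) = some j} :=
        card_equiv (splitHalves i) fun x => by
          rw [mem_filter, mem_filter, mem_vecSpace_succ_iff]; rfl
    _ = ∑ y ∈ vecSpace m i, ∑ z ∈ vecSpace m i,
          if wagnerMerge m i (wagner m i y) (wagner m i z) = some j then 1 else 0 := by
        rw [card_filter, sum_product]
    _ = ∑ y ∈ vecSpace m i, ∑ b ∈ Dm (m - i), wagnerCount m i b •
          if wagnerMerge m i (wagner m i y) (some b) = some j then 1 else 0 :=
        sum_congr rfl fun y _ => sum_comp_option_eq_sum_card_smul hD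
          (g := fun o => if wagnerMerge m i (wagner m i y) o = some j then 1 else 0) (by simp)
    _ = ∑ a ∈ Dm (m - i), wagnerCount m i a • ∑ b ∈ Dm (m - i), wagnerCount m i b •
          if wagnerMerge m i (some a) (some b) = some j then 1 else 0 :=
        sum_comp_option_eq_sum_card_smul hD (g := fun o => ∑ b ∈ Dm (m - i), wagnerCount m i b •
          if wagnerMerge m i o (some b) = some j then 1 else 0) (by simp)
    _ = _ := by simp only [smul_eq_mul]

end Counting

section Recursion

variable {m i : ℕ} {j : ℤ}

lemma wagnerCount_one (hm : 1 ≤ m) (hj : j ∈ Dm (m - 1)) : wagnerCount m 1 j = #(Dm m) := by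
  rw [wagnerCount_succ hm, Nat.sub_zero, card_eq_sum_ones]
  refine sum_congr rfl fun a ha => ?_
  -- for each first summand `a` exactly one `b ∈ Dm m` has `a + b ≡ j`
  have hmod : ∀ b, a + b ≡ j [ZMOD 2 ^ m + 1] ↔ b ≡ j - a [ZMOD 2 ^ m + 1] := fun b =>
    ⟨fun h => by simpa using h.sub_right a, fun h => by simpa using h.add_left a⟩
  calc wagnerCount m 0 a * ∑ b ∈ Dm m, wagnerCount m 0 b *
        (if wagnerMerge m 0 (some a) (some b) = some j then 1 else 0)
      = ∑ b ∈ Dm m, if b ≡ j - a [ZMOD 2 ^ m + 1] then 1 else 0 := by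
        rw [wagnerCount_zero ha, one_mul]
        refine sum_congr rfl fun b hb => ?_
        simp only [wagnerCount_zero hb, one_mul, wagnerMerge_eq_some_iff hm, zero_add, hj,
          true_and, hmod]
    _ = 1 := by rw [sum_boole, card_filter_Dm_modEq hm, Nat.cast_one]

lemma wagnerCount_succ_eq_sum (hi : 1 ≤ i) (him : i < m) (hj : j ∈ Dm (m - (i + 1))) :
    wagnerCount m (i + 1) j = ∑ a ∈ Dm (m - i), wagnerCount m i a * wagnerCount m i (j - a) := by
  have hm : 1 ≤ m := by omega
  rw [wagnerCount_succ hm]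
  refine sum_congr rfl fun a ha => congrArg (wagnerCount m i a * ·) ?_
  have hmerge : ∀ b ∈ Dm (m - i), wagnerMerge m i (some a) (some b) = some j ↔ b = j - a := by
    intro b hb
    rw [wagnerMerge_eq_some_iff hm, and_iff_right hj]
    refine ⟨fun h => ?_, fun h => by rw [h, add_sub_cancel]⟩
    -- no wrap-around: `a + b` is already the representative of its class
    have := add_eq_of_mem_Dm_of_modEq (by omega) (by omega) ha hb (Dm_mono (by omega) hj) h
    omega
  calc ∑ b ∈ Dm (m - i), wagnerCount m i b *
        (if wagnerMerge m i (some a) (some b) = some j then 1 else 0)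
      = ∑ b ∈ Dm (m - i), if b = j - a then wagnerCount m i b else 0 :=
        sum_congr rfl fun b hb => by simp only [hmerge b hb, mul_ite, mul_one, mul_zero]
    _ = wagnerCount m i (j - a) := by
        rw [sum_ite_eq']
        exact ite_eq_left_iff.mpr fun h => (wagnerCount_eq_zero hm h).symm

lemma pim_neg (hm : 1 ≤ m) : pim m i (-j) = pim m i j := by
  rw [pim_eq_wagnerCount_div, pim_eq_wagnerCount_div, wagnerCount_neg hm]

lemma pim_eq_zero (hm : 1 ≤ m) (hj : j ∉ Dm (m - i)) : pim m i j = 0 := by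
  rw [pim_eq_wagnerCount_div, wagnerCount_eq_zero hm hj, Nat.cast_zero, zero_div]

lemma pim_one (hm : 1 ≤ m) (hj : j ∈ Dm (m - 1)) : pim m 1 j = 1 / (2 ^ m + 1) := by
  have : (2 : ℝ) ^ m + 1 ≠ 0 := by positivity
  rw [pim_eq_wagnerCount_div, wagnerCount_one hm hj, card_Dm hm]
  push_cast
  field_simp

lemma pim_succ (hi : 1 ≤ i) (him : i < m) (hj : j ∈ Dm (m - (i + 1))) :
    pim m (i + 1) j = ∑ a ∈ Dm (m - i), pim m i a * pim m i (j - a) := by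
  simp only [pim_eq_wagnerCount_div, wagnerCount_succ_eq_sum hi him hj, Nat.pow_succ, pow_mul, sq,
    Nat.cast_sum, Nat.cast_mul, sum_div, mul_div_mul_comm]

end Recursion

theorem sum_Icc_mul_sub_eq_of_even {R : Type*} [CommSemiring R] {f : ℤ → R}
    (hf : Function.Even f) {A j : ℤ} (hA : ∀ t, A < t → f t = 0) (hj0 : 0 ≤ j) (hjA : j ≤ A) :
    ∑ a ∈ Icc (-A) A, f a * f (j - a) =
      ∑ k ∈ Icc 0 j, f k * f (j - k) + 2 * ∑ k ∈ Icc (j + 1) A, f k * f (k - j) := by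
  have hsplit : Icc (-A) A = Icc (-A) (-1) ∪ (Icc 0 j ∪ Icc (j + 1) A) := by
    ext; simp only [mem_union, mem_Icc]; omega
  have hdisj : Disjoint (Icc (-A) (-1)) (Icc 0 j ∪ Icc (j + 1) A) := by
    rw [disjoint_left]; intro a ha hb; simp only [mem_union, mem_Icc] at ha hb; omega
  have hdisj' : Disjoint (Icc 0 j) (Icc (j + 1) A) := by
    rw [disjoint_left]; intro a ha hb; simp only [mem_Icc] at ha hb; omega
  have hneg : ∑ a ∈ Icc (-A) (-1), f a * f (j - a) = ∑ k ∈ Icc (j + 1) A, f k * f (k - j) := by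
    calc ∑ a ∈ Icc (-A) (-1), f a * f (j - a)
        = ∑ k ∈ Icc (j + 1) (j + A), f k * f (k - j) := by
          refine sum_nbij' (fun a => j - a) (fun k => j - k) ?_ ?_ ?_ ?_ fun a _ => ?_
          · intro a ha; simp only [mem_Icc] at ha ⊢; omega
          · intro k hk; simp only [mem_Icc] at hk ⊢; omega
          · intro a _; ring
          · intro k _; ring
          · rw [mul_comm, sub_sub_cancel_left, hf]
      _ = ∑ k ∈ Icc (j + 1) A, f k * f (k - j) := by
          refine (sum_subset (Icc_subset_Icc le_rfl (by omega)) fun k hk hkA => ?_).symm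
          simp only [mem_Icc, not_and, not_le] at hk hkA
          rw [hA k (hkA hk.1), zero_mul]
  have hpos : ∑ a ∈ Icc (j + 1) A, f a * f (j - a) = ∑ k ∈ Icc (j + 1) A, f k * f (k - j) :=
    sum_congr rfl fun a _ => by rw [← neg_sub, hf]
  rw [hsplit, sum_union hdisj, sum_union hdisj', hneg, hpos]
  ring

/-- `p_{1,m}(j) = 1/(2^m+1)` on `D_{m-1}`, and the key recursion for `p_{i,m}`. -/
theorem pim_recursion (m : ℕ) (hm : 2 ≤ m) :
    (∀ j ∈ Dm (m - 1), pim m 1 j = 1 / ((2:ℝ) ^ m + 1)) ∧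
      ∀ i : ℕ, 2 ≤ i → i ≤ m - 1 → ∀ j : ℤ, 0 ≤ j → j ≤ 2 ^ (m - i - 1) →
        pim m i j = (∑ k ∈ Finset.Icc (0:ℤ) j, pim m (i-1) k * pim m (i-1) (j - k)) +
          2 * ∑ k ∈ Finset.Icc (j+1) ((2:ℤ) ^ (m - i)), pim m (i-1) k * pim m (i-1) (k - j) := by
  refine ⟨fun j hj => pim_one (by omega) hj, fun i hi him j hj0 hjle => ?_⟩
  obtain ⟨l, rfl⟩ : ∃ l, i = l + 1 := ⟨i - 1, by omega⟩
  have hj : j ∈ Dm (m - (l + 1)) := mem_Dm.mpr ⟨(neg_nonpos.mpr (by positivity)).trans hj0, hjle⟩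
  rw [Nat.add_sub_cancel, pim_succ (by omega) (by omega) hj, Dm, Nat.sub_sub]
  refine sum_Icc_mul_sub_eq_of_even (fun a => pim_neg (by omega)) (fun t ht => ?_) hj0
    (hjle.trans (pow_le_pow_right₀ one_le_two (Nat.sub_le _ _)))
  exact pim_eq_zero (by omega) fun htD => not_lt.mpr (mem_Dm.mp htD).2 (by rwa [Nat.sub_sub])
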